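/- (Continued fractions trick.) Let Γ be a subgroup of finite index of PSL(2,ℤ), let C ⊆ PSL(2,ℤ) be a complete set of representatives of the cosets Γ\PSL(2,ℤ), let N be a group with a left action of Γ by automorphisms written (γ,n) ↦ γ•n, and let J : ℙ¹(ℚ) × ℙ¹(ℚ) → N satisfy J(a,b)·J(b,c) = J(a,c) for all a,b,c ∈ ℙ¹(ℚ) and γ•J(a,b) = J(γ·a, γ·b) for all γ ∈ Γ. Then for all a, b ∈ ℙ¹(ℚ), the element J(a,b) lies in the subgroup of N generated by the elements γ•J(c·∞, c·0) for γ ∈ Γ and c ∈ C. -/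

import Mathlib

/-- The group `SL(2,ℤ)`. -/
abbrev SL2Z := Matrix.SpecialLinearGroup (Fin 2) ℤ

/-- The group `PSL(2,ℤ)`, the quotient of `SL(2,ℤ)` by its center `{±1}`. -/
abbrev PSL2Z := SL2Z ⧸ Subgroup.center SL2Z

/-- The image `σ` of the matrix `((0,-1),(1,0))` in `PSL(2,ℤ)`. -/
def pslSigma : PSL2Z :=
  QuotientGroup.mk ⟨!![0, -1; 1, 0], by norm_num [Matrix.det_fin_two_of]⟩

/-- The image `τ` of the matrix `((0,-1),(1,-1))` in `PSL(2,ℤ)`. -/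
def pslTau : PSL2Z :=
  QuotientGroup.mk ⟨!![0, -1; 1, -1], by norm_num [Matrix.det_fin_two_of]⟩

/-- The projective line `ℙ¹(ℚ) = ℚ ∪ {∞}`, realized as the projectivization of `ℚ²`. -/
abbrev P1Q := Projectivization ℚ (Fin 2 → ℚ)

/-- The linear automorphism of `ℚ²` attached to an element of `SL(2,ℤ)`. -/
noncomputable def sl2ToLin : SL2Z →* (Fin 2 → ℚ) ≃ₗ[ℚ] (Fin 2 → ℚ) :=
  (Matrix.SpecialLinearGroup.toLin').comp
    (Matrix.SpecialLinearGroup.map (Int.castRingHom ℚ))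

/-- The linear action of `SL(2,ℤ)` on the projective line (which is the Möbius
action in the affine coordinate `z = x/y`). -/
noncomputable instance instSL2ZP1Q : MulAction SL2Z P1Q where
  smul g x := Projectivization.map (sl2ToLin g).toLinearMap (sl2ToLin g).injective x
  one_smul x := by
    induction x using Projectivization.ind with
    | h v hv =>
      show Projectivization.map _ _ _ = _
      rw [Projectivization.map_mk]
      have h1 : (sl2ToLin 1).toLinearMap v = v := by simp
      exact (Projectivization.mk_eq_mk_iff ℚ _ _ _ hv).2 ⟨1, by simp [h1]⟩
  mul_smul g h x := by
    induction x using Projectivization.ind with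
    | h v hv =>
      show Projectivization.map _ _ _ =
        Projectivization.map _ _ (Projectivization.map _ _ _)
      rw [Projectivization.map_mk, Projectivization.map_mk, Projectivization.map_mk]
      have h1 : (sl2ToLin (g * h)).toLinearMap v
          = (sl2ToLin g).toLinearMap ((sl2ToLin h).toLinearMap v) := by
        simp [map_mul]
      exact (Projectivization.mk_eq_mk_iff ℚ _ _ _ _).2 ⟨1, by simp [h1]⟩

lemma center_smul_triv (z : SL2Z) (hz : z ∈ Subgroup.center SL2Z) (x : P1Q) :
    z • x = x := by
  obtain ⟨r, hr2, hrz⟩ := Matrix.SpecialLinearGroup.mem_center_iff.mp hz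
  rw [Fintype.card_fin] at hr2
  have hrr : (r : ℚ) * (r : ℚ) = 1 := by
    have := congrArg (fun t : ℤ => (t : ℚ)) hr2
    push_cast at this
    nlinarith [this]
  induction x using Projectivization.ind with
  | h v hv =>
    show Projectivization.map _ _ _ = _
    rw [Projectivization.map_mk]
    have hval : (sl2ToLin z).toLinearMap v = (r : ℚ) • v := by
      show (sl2ToLin z) v = _
      have hmat : (z : Matrix (Fin 2) (Fin 2) ℤ) = Matrix.scalar (Fin 2) r := hrz.symm
      simp only [sl2ToLin, MonoidHom.comp_apply,
        Matrix.SpecialLinearGroup.toLin'_apply, Matrix.toLin'_apply,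
        Matrix.SpecialLinearGroup.map_apply_coe, hmat]
      rw [Matrix.scalar_apply]
      ext i
      simp [Matrix.mulVec, dotProduct, Matrix.diagonal, RingHom.mapMatrix_apply,
        Fin.sum_univ_two] <;> fin_cases i <;> simp
    exact (Projectivization.mk_eq_mk_iff ℚ _ _ _ hv).2
      ⟨⟨(r : ℚ), (r : ℚ), hrr, hrr⟩, by rw [Units.smul_def]; exact hval.symm⟩

/-- The Möbius action of `PSL(2,ℤ)` on the projective line `ℙ¹(ℚ)`. -/
noncomputable instance instPSL2ZP1Q : MulAction PSL2Z P1Q where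
  smul g x := Quotient.liftOn' g (fun s : SL2Z => s • x)
    (fun a b hab => by
      have h : a⁻¹ * b ∈ Subgroup.center SL2Z := QuotientGroup.leftRel_apply.mp hab
      calc a • x = a • ((a⁻¹ * b) • x) := by rw [center_smul_triv _ h]
        _ = (a * (a⁻¹ * b)) • x := (mul_smul _ _ _).symm
        _ = b • x := by rw [mul_inv_cancel_left])
  one_smul x := one_smul SL2Z x
  mul_smul g h x := by
    refine QuotientGroup.induction_on g (fun a => QuotientGroup.induction_on h (fun b => ?_))
    show (a * b) • x = a • (b • x)
    exact mul_smul a b x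

/-- The cusp `∞ = (1 : 0)` in `ℙ¹(ℚ)`. -/
noncomputable def p1Infty : P1Q :=
  Projectivization.mk ℚ ![1, 0] (by intro h; simpa using congrFun h 0)

/-- The cusp `0 = (0 : 1)` in `ℙ¹(ℚ)`. -/
noncomputable def p1Zero : P1Q :=
  Projectivization.mk ℚ ![0, 1] (by intro h; simpa using congrFun h 1)

lemma intVec_ne (p q : ℤ) (h : ¬(p = 0 ∧ q = 0)) : ![(p:ℚ),(q:ℚ)] ≠ 0 := by
  intro hv
  refine h ⟨?_, ?_⟩
  · have := congrFun hv 0; simpa using this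
  · have := congrFun hv 1; simpa using this

lemma cop_ne (p q : ℤ) (h : IsCoprime p q) : ¬(p = 0 ∧ q = 0) := by
  rintro ⟨rfl, rfl⟩; exact not_isCoprime_zero_zero h

lemma sl2ToLin_apply (g : SL2Z) (v : Fin 2 → ℚ) :
    sl2ToLin g v = ((g : Matrix (Fin 2) (Fin 2) ℤ).map (Int.cast : ℤ → ℚ)).mulVec v := by
  simp [sl2ToLin, Matrix.SpecialLinearGroup.toLin'_apply, Matrix.toLin'_apply,
    Matrix.SpecialLinearGroup.map_apply_coe, RingHom.mapMatrix_apply, Int.coe_castRingHom]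

lemma psl_smul_mk (g : SL2Z) (v : Fin 2 → ℚ) (hv : v ≠ 0) :
    (QuotientGroup.mk g : PSL2Z) • Projectivization.mk ℚ v hv =
      Projectivization.mk ℚ (sl2ToLin g v)
        ((LinearEquiv.map_ne_zero_iff _).mpr hv) := by
  have h1 : (QuotientGroup.mk g : PSL2Z) • Projectivization.mk ℚ v hv
      = Projectivization.map (sl2ToLin g).toLinearMap (sl2ToLin g).injective
          (Projectivization.mk ℚ v hv) := rfl
  rw [h1, Projectivization.map_mk]
  rfl

/-- The element of `SL(2,ℤ)` with columns `(p,q)` and `(r,s)`. -/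
def sl2Mk (p r q s : ℤ) (h : p * s - r * q = 1) : SL2Z :=
  ⟨!![p, r; q, s], by simpa [Matrix.det_fin_two_of] using h⟩

lemma sl2Mk_smul_infty (p r q s : ℤ) (h : p * s - r * q = 1) :
    (QuotientGroup.mk (sl2Mk p r q s h) : PSL2Z) • p1Infty =
      Projectivization.mk ℚ ![(p:ℚ), (q:ℚ)]
        (intVec_ne p q (by rintro ⟨rfl, rfl⟩; simp at h)) := by
  rw [p1Infty, psl_smul_mk]
  have hv : sl2ToLin (sl2Mk p r q s h) ![1,0] = ![(p:ℚ),(q:ℚ)] := by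
    rw [sl2ToLin_apply]
    funext i; fin_cases i <;>
      simp [sl2Mk, Matrix.mulVec, dotProduct, Fin.sum_univ_two, Matrix.map_apply, Matrix.vecHead, Matrix.vecTail]
  exact (Projectivization.mk_eq_mk_iff' _ _ _ _ _).mpr ⟨1, by rw [one_smul, ← hv]⟩

lemma sl2Mk_smul_zero (p r q s : ℤ) (h : p * s - r * q = 1) :
    (QuotientGroup.mk (sl2Mk p r q s h) : PSL2Z) • p1Zero =
      Projectivization.mk ℚ ![(r:ℚ), (s:ℚ)]
        (intVec_ne r s (by rintro ⟨rfl, rfl⟩; simp at h)) := by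
  rw [p1Zero, psl_smul_mk]
  have hv : sl2ToLin (sl2Mk p r q s h) ![0,1] = ![(r:ℚ),(s:ℚ)] := by
    rw [sl2ToLin_apply]
    funext i; fin_cases i <;>
      simp [sl2Mk, Matrix.mulVec, dotProduct, Fin.sum_univ_two, Matrix.map_apply, Matrix.vecHead, Matrix.vecTail]
  exact (Projectivization.mk_eq_mk_iff' _ _ _ _ _).mpr ⟨1, by rw [one_smul, ← hv]⟩

lemma exists_int_rep (x : P1Q) : ∃ (p q : ℤ) (h : IsCoprime p q),
    x = Projectivization.mk ℚ ![(p:ℚ),(q:ℚ)] (intVec_ne p q (cop_ne p q h)) := by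
  induction x using Projectivization.ind with
  | h v hv =>
    by_cases hb : v 1 = 0
    · have ha : v 0 ≠ 0 := by
        intro h0
        exact hv (funext fun i => by fin_cases i <;> simpa [h0, hb])
      refine ⟨1, 0, isCoprime_one_left, ?_⟩
      refine (Projectivization.mk_eq_mk_iff' _ _ _ _ _).mpr ⟨v 0, ?_⟩
      funext i; fin_cases i <;> simp [hb]
    · set r : ℚ := v 0 / v 1 with hrdef
      refine ⟨r.num, (r.den : ℤ), ?_, ?_⟩
      · rw [Int.isCoprime_iff_gcd_eq_one]
        simpa [Int.gcd] using r.reduced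
      · refine (Projectivization.mk_eq_mk_iff' _ _ _ _ _).mpr ⟨v 1 / (r.den : ℚ), ?_⟩
        have hden : (r.den : ℚ) ≠ 0 := by exact_mod_cast r.den_nz
        have hnum : (r.num : ℚ) = r * (r.den : ℚ) := by
          have h0 := Rat.num_div_den r
          rw [div_eq_iff hden] at h0
          linarith
        funext i; fin_cases i
        · show v 1 / (r.den : ℚ) * (r.num : ℚ) = v 0
          calc v 1 / (r.den : ℚ) * (r.num : ℚ)
              = v 1 / (r.den : ℚ) * (r * (r.den : ℚ)) := by rw [hnum]
            _ = v 1 * r := by field_simp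
            _ = v 1 * (v 0 / v 1) := by rw [hrdef]
            _ = v 0 := by field_simp
        · show v 1 / (r.den : ℚ) * ((r.den : ℤ) : ℚ) = v 1
          push_cast; field_simp
theorem continued_fractions_trick (Γ : Subgroup PSL2Z)
    [hfin : Subgroup.FiniteIndex Γ]
    (C : Set PSL2Z)
    (hC : ∀ g : PSL2Z, ∃! c : PSL2Z, c ∈ C ∧ g * c⁻¹ ∈ Γ)
    {N : Type*} [Group N] [MulDistribMulAction Γ N]
    (J : P1Q → P1Q → N)
    (hJmul : ∀ a b c : P1Q, J a b * J b c = J a c)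
    (hJequiv : ∀ (γ : Γ) (a b : P1Q),
      γ • J a b = J ((γ : PSL2Z) • a) ((γ : PSL2Z) • b)) :
    ∀ a b : P1Q, J a b ∈ Subgroup.closure
      {n : N | ∃ (γ : Γ) (c : PSL2Z), c ∈ C ∧
        n = γ • J (c • p1Infty) (c • p1Zero)} := by
  set S : Set N := {n : N | ∃ (γ : Γ) (c : PSL2Z), c ∈ C ∧
      n = γ • J (c • p1Infty) (c • p1Zero)} with hS
  have hJ1 : ∀ x : P1Q, J x x = 1 :=
    fun x => mul_left_cancel ((hJmul x x x).trans (mul_one _).symm)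
  have hJinv : ∀ x y : P1Q, (J x y)⁻¹ = J y x := fun x y =>
    inv_eq_of_mul_eq_one_right (by rw [hJmul, hJ1])
  have edge : ∀ g : PSL2Z, J (g • p1Infty) (g • p1Zero) ∈ Subgroup.closure S := by
    intro g
    obtain ⟨c, ⟨hcC, hγ⟩, -⟩ := hC g
    refine Subgroup.subset_closure ⟨⟨g * c⁻¹, hγ⟩, c, hcC, ?_⟩
    rw [hJequiv, ← mul_smul, ← mul_smul]
    show J (g • p1Infty) (g • p1Zero) = J ((g * c⁻¹ * c) • p1Infty) ((g * c⁻¹ * c) • p1Zero)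
    rw [inv_mul_cancel_right]
  have infcase : ∀ (p : ℤ) (hco : IsCoprime p 0),
      J p1Infty (Projectivization.mk ℚ ![(p:ℚ),((0:ℤ):ℚ)] (intVec_ne p 0 (cop_ne p 0 hco)))
        ∈ Subgroup.closure S := by
    intro p hco
    have hp : p ≠ 0 := by rintro rfl; exact not_isCoprime_zero_zero hco
    have : Projectivization.mk ℚ ![(p:ℚ),((0:ℤ):ℚ)] (intVec_ne p 0 (cop_ne p 0 hco))
        = p1Infty := by
      rw [p1Infty]
      refine (Projectivization.mk_eq_mk_iff' _ _ _ _ _).mpr ⟨(p:ℚ), ?_⟩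
      funext i; fin_cases i <;> simp
    rw [this, hJ1]
    exact one_mem _
  have key : ∀ (n : ℕ) (p q : ℤ), q.natAbs ≤ n → ∀ hco : IsCoprime p q,
      J p1Infty (Projectivization.mk ℚ ![(p:ℚ),(q:ℚ)] (intVec_ne p q (cop_ne p q hco)))
        ∈ Subgroup.closure S := by
    intro n
    induction n with
    | zero =>
      intro p q hq hco
      have hq0 : q = 0 := by omega
      subst hq0
      exact infcase p hco
    | succ n ih =>
      intro p q hq hco
      by_cases hq0 : q = 0
      · subst hq0; exact infcase p hco
      · obtain ⟨u, w, huv⟩ := id hco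
        set s : ℤ := u % q with hs
        set t : ℤ := u / q with ht
        set r : ℤ := -w - p * t with hr
        have hsd : s = u - q * t := by rw [hs, ht, Int.emod_def]
        have hdet : p * s - r * q = 1 := by
          rw [hsd, hr]; linear_combination huv
        have hslt : s.natAbs < q.natAbs := by
          rw [hs]
          have h1 := Int.emod_nonneg u hq0
          have h2 := Int.emod_lt u (b := q) hq0
          omega
        have hco_rs : IsCoprime r s := ⟨-q, p, by linear_combination hdet⟩
        have h1 := ih r s (by omega) hco_rs
        have h2 := edge (QuotientGroup.mk (sl2Mk p r q s hdet))
        rw [sl2Mk_smul_infty, sl2Mk_smul_zero] at h2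
        rw [← hJmul p1Infty
          (Projectivization.mk ℚ ![(r:ℚ),(s:ℚ)] (intVec_ne r s (cop_ne r s hco_rs)))]
        exact mul_mem h1 (by rw [← hJinv]; exact inv_mem h2)
  have main : ∀ x : P1Q, J p1Infty x ∈ Subgroup.closure S := by
    intro x
    obtain ⟨p, q, hco, rfl⟩ := exists_int_rep x
    exact key q.natAbs p q le_rfl hco
  intro a b
  have hab : J a b = (J p1Infty a)⁻¹ * J p1Infty b := by
    rw [hJinv]; exact (hJmul a p1Infty b).symm
  rw [hab]
  exact mul_mem (inv_mem (main a)) (main b)
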